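/- Suppose the multi-parameter filtration F = {F(s̃)}_{s̃∈ℕ₀^d} satisfies conditions (F1), (F2), and (F4). Then for each i = 1,…,d, every supermartingale with respect to the small one-parameter filtration F_i = {F_i(t)}_{t∈ℕ₀} is also a supermartingale with respect to the large one-parameter filtration F^i = {F^i(t)}_{t∈ℕ₀}. -/

import Mathlib

/-!
Fix `u ≤ t`, put `G = F(u eᵢ)` and let `A ∈ F(r̃)` with `rᵢ ≤ u`. By (F1), `A ∈ F(r̃ ∨ u eᵢ)`, and
`(r̃ ∨ u eᵢ) ∧ t eᵢ = u eᵢ`, so (F4) makes `A` conditionally independent of `Fᵢ(t)` given `G`;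
equivalently `E[1_A | Fᵢ(t)] = E[1_A | G]`. Moving conditional expectations across products then
gives `∫_A X = ∫_A E[X | G]` for every integrable `Fᵢ(t)`-measurable `X`. Such sets `A` form a
directed union of σ-algebras generating `Fⁱ(u)`, so by a π-λ argument `E[X | Fⁱ(u)] = E[X | G]`,
and the supermartingale inequality for `Fᵢ` transfers verbatim to `Fⁱ`.
-/

open MeasureTheory Filter Set
open scoped Topology Classical

noncomputable section

namespace DynAlloc

variable {Ω : Type*}

/-- `g` is an essential supremum of the family `S` of random variables:
it is an a.e. upper bound for `S`, and a.e. below any other a.e. upper bound. -/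
def IsEssSup [MeasurableSpace Ω] (μ : Measure Ω) (S : Set (Ω → ℝ)) (g : Ω → ℝ) : Prop :=
  (∀ f ∈ S, f ≤ᵐ[μ] g) ∧ ∀ g' : Ω → ℝ, (∀ f ∈ S, f ≤ᵐ[μ] g') → g ≤ᵐ[μ] g'

/-- `β ^ n` for an extended natural number `n`, with the value `0` at `n = ∞`
(appropriate for a discount factor `β ∈ (0,1)`). -/
def epow (β : ℝ) (n : ℕ∞) : ℝ := if n = ⊤ then 0 else β ^ n.toNat

/-- The collection `S(t)`: extended-valued stopping times of the filtration `𝓕`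
taking values in `{t, t+1, …} ∪ {+∞}`. -/
def MemS (𝓕 : ℕ → MeasurableSpace Ω) (t : ℕ) (τ : Ω → ℕ∞) : Prop :=
  (∀ n : ℕ, MeasurableSet[𝓕 n] {ω | τ ω ≤ (n : ℕ∞)}) ∧ ∀ ω, (t : ℕ∞) ≤ τ ω

/-- The total reward `Y(τ;m) = Σ_{u=t}^{τ-1} β^{u-t} h(u+1) + m β^{τ-t}` received upon
stopping at the (possibly infinite) time `τ`, starting from time `t`, with exit reward `m`. -/
def stopReward (β : ℝ) (h : ℕ → Ω → ℝ) (t : ℕ) (m : ℝ) (τ : Ω → ℕ∞) (ω : Ω) : ℝ :=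
  (∑' u : ℕ, if t ≤ u ∧ (u : ℕ∞) < τ ω then β ^ (u - t) * h (u + 1) ω else 0)
    + m * epow β (τ ω - (t : ℕ∞))

/-- The family of conditional expected rewards `E[Y(τ;m) | 𝓕(t)]`, `τ ∈ S(t)`,
whose essential supremum is the optimal stopping value `V(t;m)`. -/
def VFamily [MeasurableSpace Ω] (μ : Measure Ω) (𝓕 : ℕ → MeasurableSpace Ω) (β : ℝ)
    (h : ℕ → Ω → ℝ) (t : ℕ) (m : ℝ) : Set (Ω → ℝ) :=
  {f | ∃ τ : Ω → ℕ∞, MemS 𝓕 t τ ∧ f = μ[stopReward β h t m τ | 𝓕 t]}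

/-- The optimal stopping time `σ(t;m) = inf{θ ≥ t : V(θ;m) = m}` (`= ∞` if no such θ). -/
def sigma (V : ℕ → ℝ → Ω → ℝ) (t : ℕ) (m : ℝ) (ω : Ω) : ℕ∞ :=
  sInf {θ : ℕ∞ | ∃ n : ℕ, θ = (n : ℕ∞) ∧ t ≤ n ∧ V n m ω = m}

/-- The left limit `σ(t;m−)` of the decreasing map `m' ↦ σ(t;m')` at `m`. -/
def sigmaLeft (V : ℕ → ℝ → Ω → ℝ) (t : ℕ) (m : ℝ) (ω : Ω) : ℕ∞ :=
  ⨅ m' ∈ Set.Ico (0 : ℝ) m, sigma V t m' ω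

/-- The family of positive `𝓕(t)`-measurable random variables `X` with `V(t;X) ≥ X`,
whose essential supremum is the Gittins index `M(t)`. -/
def GittinsFamily [MeasurableSpace Ω] (μ : Measure Ω) (𝓕 : ℕ → MeasurableSpace Ω)
    (V : ℕ → ℝ → Ω → ℝ) (t : ℕ) : Set (Ω → ℝ) :=
  {X | (∀ ω, 0 < X ω) ∧ StronglyMeasurable[𝓕 t] X ∧ ∀ᵐ ω ∂μ, X ω ≤ V t (X ω) ω}

/-- The lower envelope `M̲(t,θ) = min_{t ≤ u ≤ θ} M(u)` of the Gittins index. -/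
def Mlow (M : ℕ → Ω → ℝ) (t θ : ℕ) (ω : Ω) : ℝ :=
  sInf ((fun u => M u ω) '' {u : ℕ | t ≤ u ∧ u ≤ θ})

/-! ### Multi-parameter objects -/

variable {d : ℕ}

/-- The multi-parameter filtration `F(s̃) := ⋁_i F_i(s_i)` generated by `d`
one-parameter filtrations. -/
def Fmulti (𝓕i : Fin d → ℕ → MeasurableSpace Ω) (s : Fin d → ℕ) : MeasurableSpace Ω :=
  ⨆ i, 𝓕i i (s i)

/-- An allocation strategy for `s̃`: starts at `s̃`, moves one step in a coordinate
direction at each time, non-anticipatively. -/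
def IsAllocStrategy (𝓕M : (Fin d → ℕ) → MeasurableSpace Ω) (s : Fin d → ℕ)
    (T : ℕ → Ω → Fin d → ℕ) : Prop :=
  (∀ ω, T 0 ω = s) ∧
  (∀ (t : ℕ) (ω : Ω), ∃ j : Fin d, T (t + 1) ω = T t ω + Pi.single j 1) ∧
  (∀ (t : ℕ) (j : Fin d) (r : Fin d → ℕ),
    MeasurableSet[𝓕M r] {ω | T (t + 1) ω = T t ω + Pi.single j 1 ∧ T t ω = r})

/-- The σ-algebra `F(ν)` generated by a (stopping) point `ν`:
`F(ν) = σ({A : A ∩ {ν = r̃} ∈ F(r̃) for all r̃})`. -/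
def stopSigma (𝓕M : (Fin d → ℕ) → MeasurableSpace Ω) (ν : Ω → Fin d → ℕ) :
    MeasurableSpace Ω :=
  MeasurableSpace.generateFrom {A | ∀ r, MeasurableSet[𝓕M r] (A ∩ {ω | ν ω = r})}

/-- `τ` is a stopping time of the one-parameter filtration `F(T̃) = {F(T̃(t))}`. -/
def IsPolicyStop (𝓕M : (Fin d → ℕ) → MeasurableSpace Ω) (T : ℕ → Ω → Fin d → ℕ)
    (τ : Ω → ℕ∞) : Prop :=
  ∀ t : ℕ, MeasurableSet[stopSigma 𝓕M (T t)] {ω | τ ω ≤ (t : ℕ∞)}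

/-- Total discounted reward `R(Π;M)` of the policy `Π = (T̃,τ)` with retirement reward `M`. -/
def policyReward (β : ℝ) (h : Fin d → ℕ → Ω → ℝ) (T : ℕ → Ω → Fin d → ℕ)
    (τ : Ω → ℕ∞) (M : ℝ) (ω : Ω) : ℝ :=
  (∑ i : Fin d, ∑' t : ℕ,
      if (t : ℕ∞) < τ ω then
        β ^ t * h i (T t ω i + 1) ω * ((T (t + 1) ω i : ℝ) - (T t ω i : ℝ))
      else 0)
    + M * epow β (τ ω)

/-- Total discounted reward `R(T̃)` of an allocation strategy (no retirement). -/
def allocReward (β : ℝ) (h : Fin d → ℕ → Ω → ℝ) (T : ℕ → Ω → Fin d → ℕ) (ω : Ω) : ℝ :=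
  ∑ i : Fin d, ∑' t : ℕ,
    β ^ t * h i (T t ω i + 1) ω * ((T (t + 1) ω i : ℝ) - (T t ω i : ℝ))

/-- The family `{E[R(Π;M) | F(s̃)] : Π ∈ P(s̃)}` whose essential supremum is `Φ(s̃;M)`. -/
def PolicyFamily [MeasurableSpace Ω] (μ : Measure Ω) (𝓕M : (Fin d → ℕ) → MeasurableSpace Ω)
    (β : ℝ) (h : Fin d → ℕ → Ω → ℝ) (s : Fin d → ℕ) (M : ℝ) : Set (Ω → ℝ) :=
  {f | ∃ (T : ℕ → Ω → Fin d → ℕ) (τ : Ω → ℕ∞),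
      IsAllocStrategy 𝓕M s T ∧ IsPolicyStop 𝓕M T τ ∧
      f = μ[policyReward β h T τ M | 𝓕M s]}

/-- The family `{E[R(T̃) | F(s̃)] : T̃ ∈ A(s̃)}` whose essential supremum is `Φ(s̃)`. -/
def AllocFamily [MeasurableSpace Ω] (μ : Measure Ω) (𝓕M : (Fin d → ℕ) → MeasurableSpace Ω)
    (β : ℝ) (h : Fin d → ℕ → Ω → ℝ) (s : Fin d → ℕ) : Set (Ω → ℝ) :=
  {f | ∃ T : ℕ → Ω → Fin d → ℕ, IsAllocStrategy 𝓕M s T ∧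
      f = μ[allocReward β h T | 𝓕M s]}

/-- A strategy of index type: it always engages a project of maximal Gittins index. -/
def IsIndexType (MG : Fin d → ℕ → Ω → ℝ) (T : ℕ → Ω → Fin d → ℕ) : Prop :=
  ∀ (i : Fin d) (t : ℕ) (ω : Ω), T (t + 1) ω = T t ω + Pi.single i 1 →
    MG i (T t ω i) ω = ⨆ j : Fin d, MG j (T t ω j) ω

/-- The total operational time `τ(m;s̃) = Σ_i (σ_i(s_i;m) − s_i)`. -/
def tauOp (V : Fin d → ℕ → ℝ → Ω → ℝ) (s : Fin d → ℕ) (m : ℝ) (ω : Ω) : ℕ∞ :=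
  ∑ i : Fin d, (sigma (V i) (s i) m ω - (s i : ℕ∞))

/-- The left limit `τ(m−;s̃)` of the decreasing map `m' ↦ τ(m';s̃)` at `m`. -/
def tauOpLeft (V : Fin d → ℕ → ℝ → Ω → ℝ) (s : Fin d → ℕ) (m : ℝ) (ω : Ω) : ℕ∞ :=
  ⨅ m' ∈ Set.Ico (0 : ℝ) m, tauOp V s m' ω

/-- The right inverse `N(t;s̃) = inf{m ≥ 0 : τ(m;s̃) ≤ t}` of the total operational time. -/
def Nval (V : Fin d → ℕ → ℝ → Ω → ℝ) (s : Fin d → ℕ) (t : ℕ) (ω : Ω) : ℝ :=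
  sInf {m : ℝ | 0 ≤ m ∧ tauOp V s m ω ≤ (t : ℕ∞)}

/-- The synchronization identity for an allocation strategy `T̃` started at `s̃`. -/
def SatisfiesSync [MeasurableSpace Ω] (μ : Measure Ω) (V : Fin d → ℕ → ℝ → Ω → ℝ)
    (s : Fin d → ℕ) (T : ℕ → Ω → Fin d → ℕ) : Prop :=
  ∀ᵐ ω ∂μ, ∀ (t : ℕ) (m : ℝ), 0 < m →
    (∑ i : Fin d, min ((T t ω i - s i : ℕ) : ℕ∞) (sigma (V i) (s i) m ω - (s i : ℕ∞)))
      = min (t : ℕ∞) (tauOp V s m ω)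

/-- The quantities `y_i(t) = τ(N(t)) + Σ_{j ≤ i} Δσ_j(N(t))` used to define the explicit
synchronization-type strategy (the sum ranges over the first `i` projects). -/
def yfun (V : Fin d → ℕ → ℝ → Ω → ℝ) (s : Fin d → ℕ) (i : ℕ) (t : ℕ) (ω : Ω) : ℕ∞ :=
  tauOp V s (Nval V s t ω) ω +
    ∑ j ∈ Finset.univ.filter (fun j : Fin d => (j : ℕ) < i),
      (sigmaLeft (V j) (s j) (Nval V s t ω) ω - sigma (V j) (s j) (Nval V s t ω) ω)

/-- The unique (1-indexed) `k = k(t)` with `y_{k−1}(t) ≤ t < y_k(t)`. -/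
def kfun (V : Fin d → ℕ → ℝ → Ω → ℝ) (s : Fin d → ℕ) (t : ℕ) (ω : Ω) : ℕ :=
  sInf {i : ℕ | 1 ≤ i ∧ (t : ℕ∞) < yfun V s i t ω}

/-- The explicit allocation strategy of (5.9) (translated to start at `s̃`):
`T*_i(t) = σ_i(N(t)−)` for `i < k(t)`, `T*_{k(t)}(t) = σ_{k(t)}(N(t)) + t − y_{k(t)−1}(t)`,
and `T*_i(t) = σ_i(N(t))` for `i > k(t)`. -/
def Tstar (V : Fin d → ℕ → ℝ → Ω → ℝ) (s : Fin d → ℕ) (t : ℕ) (ω : Ω) : Fin d → ℕ :=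
  if t = 0 then s
  else fun i =>
    if (i : ℕ) + 1 < kfun V s t ω then
      (sigmaLeft (V i) (s i) (Nval V s t ω) ω).toNat
    else if (i : ℕ) + 1 = kfun V s t ω then
      (sigma (V i) (s i) (Nval V s t ω) ω).toNat + (t - (yfun V s (i : ℕ) t ω).toNat)
    else (sigma (V i) (s i) (Nval V s t ω) ω).toNat

/-- The "large" one-parameter filtration `F^i(t) = σ(⋃_{r : r_i ≤ t} F(r̃))`. -/
def Fbig {d : ℕ} (𝓕M : (Fin d → ℕ) → MeasurableSpace Ω) (i : Fin d) (t : ℕ) :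
    MeasurableSpace Ω :=
  ⨆ (r : Fin d → ℕ) (_ : r i ≤ t), 𝓕M r

section CondExp

variable {m m₂ G m0 : MeasurableSpace Ω} {μ : Measure Ω}

lemma indicator_one_mul_eq_indicator {M₀ : Type*} [MulZeroOneClass M₀] (A : Set Ω)
    (h : Ω → M₀) : A.indicator (fun _ => (1 : M₀)) * h = A.indicator h := by
  ext x
  by_cases hx : x ∈ A <;> simp [hx]

lemma integral_indicator_one_mul {A : Set Ω} (hA : MeasurableSet A) (h : Ω → ℝ) :
    ∫ x, A.indicator (fun _ => (1 : ℝ)) x * h x ∂μ = ∫ x in A, h x ∂μ := by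
  rw [← integral_indicator hA, ← indicator_one_mul_eq_indicator A h]
  rfl

lemma integral_mul_eq_integral_condExp_mul (hm : m ≤ m0) [SigmaFinite (μ.trim hm)]
    {f g : Ω → ℝ} (hg : StronglyMeasurable[m] g) (hfg : Integrable (f * g) μ)
    (hf : Integrable f μ) :
    ∫ x, f x * g x ∂μ = ∫ x, (μ[f | m]) x * g x ∂μ :=
  (integral_condExp hm).symm.trans
    (integral_congr_ae (condExp_mul_of_stronglyMeasurable_right hg hfg hf))

lemma norm_condExp_indicator_one_le (A : Set Ω) :
    ∀ᵐ x ∂μ, ‖(μ[A.indicator (fun _ => (1 : ℝ)) | m]) x‖ ≤ 1 := by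
  have h1 : ∀ x, |A.indicator (fun _ => (1 : ℝ)) x| ≤ 1 := fun x => by
    by_cases hx : x ∈ A <;> simp [hx]
  simpa using ae_bdd_abs_condExp_of_ae_bdd_abs (m := m) (ae_of_all μ h1)

lemma condExp_indicator_ae_eq_of_condIndep (hG : G ≤ m₂) (hm₂ : m₂ ≤ m0) [IsFiniteMeasure μ]
    {A : Set Ω} (hA : MeasurableSet A)
    (hindep : ∀ B, MeasurableSet[m₂] B →
      μ[(A ∩ B).indicator (fun _ => (1 : ℝ)) | G] =ᵐ[μ]
        fun ω => (μ[A.indicator (fun _ => (1 : ℝ)) | G]) ω *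
          (μ[B.indicator (fun _ => (1 : ℝ)) | G]) ω) :
    μ[A.indicator (fun _ => (1 : ℝ)) | m₂] =ᵐ[μ] μ[A.indicator (fun _ => (1 : ℝ)) | G] := by
  have hGm0 : G ≤ m0 := hG.trans hm₂
  refine (ae_eq_condExp_of_forall_setIntegral_eq hm₂ ((integrable_const 1).indicator hA)
    (fun _ _ _ => integrable_condExp.integrableOn) (fun B hB _ => ?_)
    (stronglyMeasurable_condExp.mono hG).aestronglyMeasurable).symm
  have hB0 : MeasurableSet B := hm₂ _ hB
  have hBA : Integrable (B.indicator (fun _ => (1 : ℝ)) * μ[A.indicator (fun _ => 1) | G]) μ := by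
    rw [indicator_one_mul_eq_indicator]
    exact integrable_condExp.indicator hB0
  calc ∫ x in B, (μ[A.indicator (fun _ => (1 : ℝ)) | G]) x ∂μ
      = ∫ x, B.indicator (fun _ => (1 : ℝ)) x * (μ[A.indicator (fun _ => 1) | G]) x ∂μ :=
        (integral_indicator_one_mul hB0 _).symm
    _ = ∫ x, (μ[B.indicator (fun _ => (1 : ℝ)) | G]) x * (μ[A.indicator (fun _ => 1) | G]) x ∂μ :=
        integral_mul_eq_integral_condExp_mul hGm0 stronglyMeasurable_condExp hBA
          ((integrable_const 1).indicator hB0)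
    _ = ∫ x, (μ[(A ∩ B).indicator (fun _ => (1 : ℝ)) | G]) x ∂μ := by
        refine integral_congr_ae ?_
        filter_upwards [hindep B hB] with x hx
        rw [hx, mul_comm]
    _ = ∫ x in B, A.indicator (fun _ => (1 : ℝ)) x ∂μ := by
        rw [integral_condExp hGm0, setIntegral_indicator hA, integral_indicator (hA.inter hB0),
          inter_comm]

lemma setIntegral_condExp_eq_of_condExp_indicator_ae_eq (hG : G ≤ m₂) (hm₂ : m₂ ≤ m0)
    [IsFiniteMeasure μ] {A : Set Ω} (hA : MeasurableSet A)
    (hAG : μ[A.indicator (fun _ => (1 : ℝ)) | m₂] =ᵐ[μ] μ[A.indicator (fun _ => (1 : ℝ)) | G])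
    {f : Ω → ℝ} (hf : Integrable f μ) (hfm : StronglyMeasurable[m₂] f) :
    ∫ x in A, (μ[f | G]) x ∂μ = ∫ x in A, f x ∂μ := by
  have hGm0 : G ≤ m0 := hG.trans hm₂
  have hfA : Integrable (f * μ[A.indicator (fun _ => (1 : ℝ)) | G]) μ :=
    hf.mul_bdd integrable_condExp.aestronglyMeasurable (norm_condExp_indicator_one_le A)
  have hAf : Integrable (A.indicator (fun _ => (1 : ℝ)) * f) μ := by
    rw [indicator_one_mul_eq_indicator]
    exact hf.indicator hA
  have hAfG : Integrable (A.indicator (fun _ => (1 : ℝ)) * μ[f | G]) μ := by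
    rw [indicator_one_mul_eq_indicator]
    exact integrable_condExp.indicator hA
  have hA1 : Integrable (A.indicator (fun _ => (1 : ℝ))) μ := (integrable_const 1).indicator hA
  calc ∫ x in A, (μ[f | G]) x ∂μ
      = ∫ x, A.indicator (fun _ => (1 : ℝ)) x * (μ[f | G]) x ∂μ :=
        (integral_indicator_one_mul hA _).symm
    _ = ∫ x, (μ[A.indicator (fun _ => (1 : ℝ)) | G]) x * (μ[f | G]) x ∂μ :=
        integral_mul_eq_integral_condExp_mul hGm0 stronglyMeasurable_condExp hAfG hA1
    _ = ∫ x, f x * (μ[A.indicator (fun _ => (1 : ℝ)) | G]) x ∂μ := by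
        simp_rw [mul_comm _ ((μ[f | G]) _)]
        exact (integral_mul_eq_integral_condExp_mul hGm0 stronglyMeasurable_condExp hfA hf).symm
    _ = ∫ x, f x * (μ[A.indicator (fun _ => (1 : ℝ)) | m₂]) x ∂μ :=
        integral_congr_ae (by filter_upwards [hAG] with x hx using by rw [hx])
    _ = ∫ x, A.indicator (fun _ => (1 : ℝ)) x * f x ∂μ := by
        simp_rw [mul_comm (f _)]
        exact (integral_mul_eq_integral_condExp_mul hm₂ hfm hAf hA1).symm
    _ = ∫ x in A, f x ∂μ := integral_indicator_one_mul hA _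

theorem ae_eq_condExp_iSup_of_forall_setIntegral_eq {ι E : Type*} [Nonempty ι]
    [NormedAddCommGroup E] [NormedSpace ℝ E] [CompleteSpace E] [IsFiniteMeasure μ]
    {𝓖 : ι → MeasurableSpace Ω} (h𝓖 : ∀ j, 𝓖 j ≤ m0) (hdir : Directed (· ≤ ·) 𝓖)
    {f g : Ω → E} (hf : Integrable f μ) (hg : Integrable g μ)
    (hgm : StronglyMeasurable[⨆ j, 𝓖 j] g)
    (heq : ∀ j s, MeasurableSet[𝓖 j] s → ∫ x in s, g x ∂μ = ∫ x in s, f x ∂μ) :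
    g =ᵐ[μ] μ[f | ⨆ j, 𝓖 j] := by
  have hle : ⨆ j, 𝓖 j ≤ m0 := iSup_le h𝓖
  refine ae_eq_condExp_of_forall_setIntegral_eq hle hf (fun _ _ _ => hg.integrableOn)
    (fun s hs _ => ?_) hgm.aestronglyMeasurable
  have hpi : IsPiSystem {s | ∃ j, MeasurableSet[𝓖 j] s} := by
    rw [Set.ofPred_exists]
    exact isPiSystem_iUnion_of_directed_le _ (fun j => (𝓖 j).isPiSystem_measurableSet) hdir
  induction s, hs
    using MeasurableSpace.induction_on_inter (MeasurableSpace.measurableSpace_iSup_eq 𝓖) hpi with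
  | empty => simp
  | basic s hs =>
    obtain ⟨j, hj⟩ := hs
    exact heq j s hj
  | compl s hs ih =>
    have hs0 : MeasurableSet s := hle _ hs
    obtain ⟨j⟩ := ‹Nonempty ι›
    have huniv := heq j univ MeasurableSet.univ
    rw [setIntegral_univ, setIntegral_univ] at huniv
    rw [setIntegral_compl hs0 hg, setIntegral_compl hs0 hf, huniv, ih (measure_lt_top _ _)]
  | iUnion s hdisj hs ih =>
    have hs0 : ∀ n, MeasurableSet (s n) := fun n => hle _ (hs n)
    rw [integral_iUnion hs0 hdisj hg.integrableOn, integral_iUnion hs0 hdisj hf.integrableOn]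
    exact tsum_congr fun n => ih n (measure_lt_top _ _)

end CondExp

section Enlargement

variable {𝓕M : (Fin d → ℕ) → MeasurableSpace Ω}

lemma sup_single_inf_single (i : Fin d) {u t : ℕ} (hut : u ≤ t) {r : Fin d → ℕ}
    (hr : r i ≤ u) : (r ⊔ Pi.single i u) ⊓ Pi.single i t = Pi.single i u := by
  ext j
  rcases eq_or_ne j i with rfl | hj
  · simp only [Pi.inf_apply, Pi.sup_apply, Pi.single_eq_same]
    omega
  · simp [Pi.single_eq_of_ne hj]

lemma single_le_Fbig (i : Fin d) (t : ℕ) : 𝓕M (Pi.single i t) ≤ Fbig 𝓕M i t :=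
  le_iSup₂_of_le (Pi.single i t) (by simp) le_rfl

lemma Fbig_eq_iSup_subtype (i : Fin d) (t : ℕ) :
    Fbig 𝓕M i t = ⨆ r : {r : Fin d → ℕ // r i ≤ t}, 𝓕M r :=
  iSup_subtype'

lemma directed_Fbig_generators (hF1 : ∀ s r : Fin d → ℕ, s ≤ r → 𝓕M s ≤ 𝓕M r)
    (i : Fin d) (t : ℕ) :
    Directed (· ≤ ·) fun r : {r : Fin d → ℕ // r i ≤ t} => 𝓕M r :=
  fun r s => ⟨⟨r ⊔ s, sup_le r.2 s.2⟩, hF1 _ _ le_sup_left, hF1 _ _ le_sup_right⟩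

theorem condExp_Fbig_ae_eq_condExp_single [m0 : MeasurableSpace Ω] {μ : Measure Ω}
    [IsFiniteMeasure μ]
    (hF1 : ∀ s r : Fin d → ℕ, s ≤ r → 𝓕M s ≤ 𝓕M r)
    (hle : ∀ s : Fin d → ℕ, 𝓕M s ≤ m0)
    (hF4 : ∀ (s r : Fin d → ℕ) (A B : Set Ω), MeasurableSet[𝓕M s] A →
      MeasurableSet[𝓕M r] B →
      μ[(A ∩ B).indicator (fun _ => (1 : ℝ)) | 𝓕M (s ⊓ r)] =ᵐ[μ]
        fun ω => (μ[A.indicator (fun _ => (1 : ℝ)) | 𝓕M (s ⊓ r)]) ω *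
          (μ[B.indicator (fun _ => (1 : ℝ)) | 𝓕M (s ⊓ r)]) ω)
    (i : Fin d) {u t : ℕ} (hut : u ≤ t) {f : Ω → ℝ} (hf : Integrable f μ)
    (hfm : StronglyMeasurable[𝓕M (Pi.single i t)] f) :
    μ[f | Fbig 𝓕M i u] =ᵐ[μ] μ[f | 𝓕M (Pi.single i u)] := by
  have hut' : 𝓕M (Pi.single i u) ≤ 𝓕M (Pi.single i t) := hF1 _ _ (Pi.single_le_single.2 hut)
  have hu : (Pi.single i u : Fin d → ℕ) i ≤ u := by simp
  have : Nonempty {r : Fin d → ℕ // r i ≤ u} := ⟨⟨_, hu⟩⟩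
  rw [Fbig_eq_iSup_subtype]
  refine (ae_eq_condExp_iSup_of_forall_setIntegral_eq
    (𝓖 := fun r : {r : Fin d → ℕ // r i ≤ u} => 𝓕M r) (fun r => hle r)
    (directed_Fbig_generators hF1 i u) hf integrable_condExp
    (stronglyMeasurable_condExp.mono (le_iSup_of_le ⟨_, hu⟩ le_rfl))
    ?_).symm
  rintro ⟨r, hr⟩ A hA
  have hA' : MeasurableSet[𝓕M (r ⊔ Pi.single i u)] A := hF1 _ _ le_sup_left _ hA
  refine setIntegral_condExp_eq_of_condExp_indicator_ae_eq hut' (hle _) (hle r _ hA) ?_ hf hfm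
  refine condExp_indicator_ae_eq_of_condIndep hut' (hle _) (hle r _ hA) fun B hB => ?_
  simpa only [sup_single_inf_single i hut hr] using hF4 _ _ A B hA' hB

end Enlargement

theorem enlargement_of_filtrations_general {Ω : Type*}
    [m0 : MeasurableSpace Ω] (μ : Measure Ω) [IsProbabilityMeasure μ]
    {d : ℕ}
    (𝓕M : (Fin d → ℕ) → MeasurableSpace Ω)
    (hF1 : ∀ s r : Fin d → ℕ, s ≤ r → 𝓕M s ≤ 𝓕M r)
    (hle : ∀ s : Fin d → ℕ, 𝓕M s ≤ m0)
    (hF4 : ∀ (s r : Fin d → ℕ) (A B : Set Ω), MeasurableSet[𝓕M s] A →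
      MeasurableSet[𝓕M r] B →
      μ[(A ∩ B).indicator (fun _ => (1 : ℝ)) | 𝓕M (s ⊓ r)] =ᵐ[μ]
        fun ω => (μ[A.indicator (fun _ => (1 : ℝ)) | 𝓕M (s ⊓ r)]) ω *
          (μ[B.indicator (fun _ => (1 : ℝ)) | 𝓕M (s ⊓ r)]) ω)
    (i : Fin d) (X : ℕ → Ω → ℝ)
    (hadp : ∀ t : ℕ, StronglyMeasurable[𝓕M (Pi.single i t)] (X t))
    (hint : ∀ t : ℕ, Integrable (X t) μ)
    (hsm : ∀ u t : ℕ, u ≤ t → μ[X t | 𝓕M (Pi.single i u)] ≤ᵐ[μ] X u) :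
    (∀ t : ℕ, StronglyMeasurable[Fbig 𝓕M i t] (X t)) ∧
    (∀ t : ℕ, Integrable (X t) μ) ∧
    (∀ u t : ℕ, u ≤ t → μ[X t | Fbig 𝓕M i u] ≤ᵐ[μ] X u) :=
  ⟨fun t => (hadp t).mono (single_le_Fbig i t), hint, fun u t hut =>
    (condExp_Fbig_ae_eq_condExp_single hF1 hle hF4 i hut (hint t) (hadp t)).trans_le
      (hsm u t hut)⟩

/-- Proposition 6.5 (enlargement of filtrations): under (F1), (F2), (F4), every
supermartingale for the small filtration `F_i(t) = F(0,…,t,…,0)` is also a supermartingale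
for the large filtration `F^i`. -/
theorem enlargement_of_filtrations {Ω : Type*}
    [m0 : MeasurableSpace Ω] (μ : Measure Ω) [IsProbabilityMeasure μ]
    {d : ℕ} (hd : 0 < d)
    (𝓕M : (Fin d → ℕ) → MeasurableSpace Ω)
    (hF1 : ∀ s r : Fin d → ℕ, s ≤ r → 𝓕M s ≤ 𝓕M r)
    (hle : ∀ s : Fin d → ℕ, 𝓕M s ≤ m0)
    (hF2 : ∀ A : Set Ω, μ A = 0 → MeasurableSet[𝓕M 0] A)
    (hF4 : ∀ (s r : Fin d → ℕ) (A B : Set Ω), MeasurableSet[𝓕M s] A →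
      MeasurableSet[𝓕M r] B →
      μ[(A ∩ B).indicator (fun _ => (1 : ℝ)) | 𝓕M (s ⊓ r)] =ᵐ[μ]
        fun ω => (μ[A.indicator (fun _ => (1 : ℝ)) | 𝓕M (s ⊓ r)]) ω *
          (μ[B.indicator (fun _ => (1 : ℝ)) | 𝓕M (s ⊓ r)]) ω)
    (i : Fin d) (X : ℕ → Ω → ℝ)
    (hadp : ∀ t : ℕ, StronglyMeasurable[𝓕M (Pi.single i t)] (X t))
    (hint : ∀ t : ℕ, Integrable (X t) μ)
    (hsm : ∀ u t : ℕ, u ≤ t → μ[X t | 𝓕M (Pi.single i u)] ≤ᵐ[μ] X u) :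
    (∀ t : ℕ, StronglyMeasurable[Fbig 𝓕M i t] (X t)) ∧
    (∀ t : ℕ, Integrable (X t) μ) ∧
    (∀ u t : ℕ, u ≤ t → μ[X t | Fbig 𝓕M i u] ≤ᵐ[μ] X u) :=
  enlargement_of_filtrations_general (m0 := m0) μ 𝓕M hF1 hle hF4 i X hadp hint hsm

end DynAlloc
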